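/- On the set A of nonunital 'infinite matrices' a: ℕ² → ℂ with sup_{i,j}(i+j)^k |a_{ij}| < ∞ for all k, the operation a ∘ b = a + b + ab (where ab is matrix multiplication (ab)_{ij} = Σ_l a_{il} b_{lj}) is well-defined (the series converges absolutely and the result lies in A) and is associative. -/

import Mathlib

open scoped BigOperators

/-- Rapid decay of an infinite matrix: `sup_{i,j} (i+j)^k |a_{ij}| < ∞` for all `k`. -/
def RapidDecay (a : ℕ → ℕ → ℂ) : Prop :=
  ∀ k : ℕ, ∃ C : ℝ, ∀ i j : ℕ, ((i : ℝ) + j) ^ k * ‖a i j‖ ≤ C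

/-- The infinite matrix product `(ab)_{ij} = ∑_l a_{il} b_{lj}`. -/
noncomputable def infMul (a b : ℕ → ℕ → ℂ) : ℕ → ℕ → ℂ :=
  fun i j => ∑' l : ℕ, a i l * b l j

/-- The group operation `a ∘ b = a + b + ab` on `Id + Ψ^{-∞}`. -/
noncomputable def circOp (a b : ℕ → ℕ → ℂ) : ℕ → ℕ → ℂ :=
  fun i j => a i j + b i j + infMul a b i j

/-!
Rapid decay of `a` gives `(i + j)^k ‖a i j‖ ≤ C / (1 + i^2)` and `≤ C / (1 + j^2)`, so all the
matrix-product series are dominated by the summable sequence `1 / (1 + l^2)`. Together with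
`i + j ≤ (i + l) + (l + j)` this shows that the product of rapidly decaying matrices decays rapidly,
and the triple product is absolutely summable over both inner indices, so the two iterated sums
may be interchanged. Associativity of `a ∘ b = a + b + ab` then follows from bilinearity and
associativity of the product.
-/

open Function

lemma summable_div_one_add_sq (C : ℝ) : Summable fun l : ℕ => C / (1 + (l : ℝ) ^ 2) := by
  have hsq : Summable fun l : ℕ => 1 / ((l : ℝ) + 1) ^ 2 := by
    simpa using (summable_nat_add_iff 1).mpr (Real.summable_one_div_nat_pow.mpr one_lt_two)
  have hone : Summable fun l : ℕ => 1 / (1 + (l : ℝ) ^ 2) :=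
    (hsq.mul_left 2).of_nonneg_of_le (fun l => by positivity) fun l => by
      rw [mul_one_div, div_le_div_iff₀ (by positivity) (by positivity)]
      nlinarith [sq_nonneg ((l : ℝ) - 1)]
  simpa only [mul_one_div] using hone.mul_left C

section RapidDecay

variable {a b c : ℕ → ℕ → ℂ}

lemma RapidDecay.exists_nonneg_bound (ha : RapidDecay a) (k : ℕ) :
    ∃ C, 0 ≤ C ∧ ∀ i j : ℕ, ((i : ℝ) + j) ^ k * ‖a i j‖ ≤ C := by
  obtain ⟨C, hC⟩ := ha k
  exact ⟨C, (mul_nonneg (by positivity) (norm_nonneg _)).trans (hC 0 0), hC⟩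

lemma RapidDecay.exists_le_div_one_add_sq (ha : RapidDecay a) (k : ℕ) :
    ∃ C, 0 ≤ C ∧ ∀ i j : ℕ,
      ((i : ℝ) + j) ^ k * ‖a i j‖ ≤ C / (1 + (i : ℝ) ^ 2) ∧
      ((i : ℝ) + j) ^ k * ‖a i j‖ ≤ C / (1 + (j : ℝ) ^ 2) := by
  obtain ⟨C₀, hC₀, h₀⟩ := ha.exists_nonneg_bound k
  obtain ⟨C₂, hC₂, h₂⟩ := ha.exists_nonneg_bound (k + 2)
  have hsum : ∀ i j : ℕ, ((i : ℝ) + j) ^ k * ‖a i j‖ ≤ (C₀ + C₂) / (1 + ((i : ℝ) + j) ^ 2) := by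
    intro i j
    rw [le_div_iff₀ (by positivity)]
    calc ((i : ℝ) + j) ^ k * ‖a i j‖ * (1 + ((i : ℝ) + j) ^ 2)
        = ((i : ℝ) + j) ^ k * ‖a i j‖ + ((i : ℝ) + j) ^ (k + 2) * ‖a i j‖ := by ring
      _ ≤ C₀ + C₂ := add_le_add (h₀ i j) (h₂ i j)
  refine ⟨C₀ + C₂, by positivity, fun i j => ⟨(hsum i j).trans ?_, (hsum i j).trans ?_⟩⟩ <;>
    gcongr <;> linarith [(i.cast_nonneg : (0 : ℝ) ≤ i), (j.cast_nonneg : (0 : ℝ) ≤ j)]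

lemma RapidDecay.exists_mul_norm_mul_le (ha : RapidDecay a) (hb : RapidDecay b) (k : ℕ) :
    ∃ E, 0 ≤ E ∧ ∀ i l j : ℕ,
      ((i : ℝ) + j) ^ k * ‖a i l * b l j‖ ≤ E / (1 + (l : ℝ) ^ 2) := by
  obtain ⟨A, hA0, hA⟩ := ha.exists_le_div_one_add_sq k
  obtain ⟨A₀, hA₀0, hA₀⟩ := ha.exists_le_div_one_add_sq 0
  obtain ⟨B, hB0, hB⟩ := hb.exists_nonneg_bound k
  obtain ⟨B₀, hB₀0, hB₀⟩ := hb.exists_nonneg_bound 0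
  refine ⟨2 ^ (k - 1) * (A * B₀ + A₀ * B), by positivity, fun i l j => ?_⟩
  have hij : ((i : ℝ) + j) ^ k ≤ 2 ^ (k - 1) * (((i : ℝ) + l) ^ k + ((l : ℝ) + j) ^ k) :=
    (pow_le_pow_left₀ (by positivity) (by linarith [(l.cast_nonneg : (0 : ℝ) ≤ l)]) k).trans
      (add_pow_le (by positivity) (by positivity) k)
  calc ((i : ℝ) + j) ^ k * ‖a i l * b l j‖
      ≤ 2 ^ (k - 1) * (((i : ℝ) + l) ^ k + ((l : ℝ) + j) ^ k) * (‖a i l‖ * ‖b l j‖) := by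
        rw [norm_mul]; gcongr
    _ = 2 ^ (k - 1) * (((i : ℝ) + l) ^ k * ‖a i l‖ * ‖b l j‖
          + ‖a i l‖ * (((l : ℝ) + j) ^ k * ‖b l j‖)) := by ring
    _ ≤ 2 ^ (k - 1) * (A / (1 + (l : ℝ) ^ 2) * B₀ + A₀ / (1 + (l : ℝ) ^ 2) * B) := by
        gcongr
        · exact (hA i l).2
        · simpa using hB₀ l j
        · simpa using (hA₀ i l).2
        · exact hB l j
    _ = 2 ^ (k - 1) * (A * B₀ + A₀ * B) / (1 + (l : ℝ) ^ 2) := by ring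

lemma RapidDecay.summable_norm_mul (ha : RapidDecay a) (hb : RapidDecay b) (i j : ℕ) :
    Summable fun l : ℕ => ‖a i l * b l j‖ := by
  obtain ⟨E, -, hE⟩ := ha.exists_mul_norm_mul_le hb 0
  exact (summable_div_one_add_sq E).of_nonneg_of_le (fun _ => norm_nonneg _)
    fun l => by simpa using hE i l j

lemma RapidDecay.summable_mul (ha : RapidDecay a) (hb : RapidDecay b) (i j : ℕ) :
    Summable fun l : ℕ => a i l * b l j :=
  (ha.summable_norm_mul hb i j).of_norm

lemma RapidDecay.infMul (ha : RapidDecay a) (hb : RapidDecay b) : RapidDecay (infMul a b) := by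
  intro k
  obtain ⟨E, -, hE⟩ := ha.exists_mul_norm_mul_le hb k
  refine ⟨∑' l : ℕ, E / (1 + (l : ℝ) ^ 2), fun i j => ?_⟩
  have hsum := ha.summable_norm_mul hb i j
  calc ((i : ℝ) + j) ^ k * ‖_root_.infMul a b i j‖
      ≤ ((i : ℝ) + j) ^ k * ∑' l : ℕ, ‖a i l * b l j‖ := by
        gcongr; exact norm_tsum_le_tsum_norm hsum
    _ = ∑' l : ℕ, ((i : ℝ) + j) ^ k * ‖a i l * b l j‖ := tsum_mul_left.symm
    _ ≤ ∑' l : ℕ, E / (1 + (l : ℝ) ^ 2) :=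
        (hsum.mul_left _).tsum_le_tsum (hE i · j) (summable_div_one_add_sq E)

lemma RapidDecay.add (ha : RapidDecay a) (hb : RapidDecay b) : RapidDecay (a + b) := by
  intro k
  obtain ⟨A, hA⟩ := ha k
  obtain ⟨B, hB⟩ := hb k
  refine ⟨A + B, fun i j => ?_⟩
  calc ((i : ℝ) + j) ^ k * ‖(a + b) i j‖ ≤ ((i : ℝ) + j) ^ k * (‖a i j‖ + ‖b i j‖) := by
        gcongr; exact norm_add_le _ _
    _ ≤ A + B := by rw [mul_add]; exact add_le_add (hA i j) (hB i j)

lemma circOp_eq_add_infMul (a b : ℕ → ℕ → ℂ) : circOp a b = a + b + infMul a b := rfl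

lemma RapidDecay.circOp (ha : RapidDecay a) (hb : RapidDecay b) : RapidDecay (circOp a b) :=
  (ha.add hb).add (ha.infMul hb)

lemma RapidDecay.summable_uncurry_mul_mul (ha : RapidDecay a) (hb : RapidDecay b)
    (hc : RapidDecay c) (i j : ℕ) :
    Summable (uncurry fun m l : ℕ => a i m * b m l * c l j) := by
  obtain ⟨E, hE0, hE⟩ := ha.exists_mul_norm_mul_le hb 0
  obtain ⟨C, hC0, hC⟩ := hc.exists_le_div_one_add_sq 0
  refine Summable.of_norm <| ((summable_div_one_add_sq E).mul_of_nonneg (summable_div_one_add_sq C)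
    (fun _ => by positivity) (fun _ => by positivity)).of_nonneg_of_le (fun _ => norm_nonneg _) ?_
  rintro ⟨m, l⟩
  rw [uncurry_apply_pair, norm_mul]
  exact mul_le_mul (by simpa using hE i m l) (by simpa using (hC l j).1) (norm_nonneg _)
    (by positivity)

end RapidDecay

section infMul

variable {a b c : ℕ → ℕ → ℂ}

lemma infMul_add_left (hac : ∀ i j, Summable fun l => a i l * c l j)
    (hbc : ∀ i j, Summable fun l => b i l * c l j) :
    infMul (a + b) c = infMul a c + infMul b c := by
  funext i j
  simp only [infMul, Pi.add_apply, add_mul]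
  exact (hac i j).tsum_add (hbc i j)

lemma infMul_add_right (hab : ∀ i j, Summable fun l => a i l * b l j)
    (hac : ∀ i j, Summable fun l => a i l * c l j) :
    infMul a (b + c) = infMul a b + infMul a c := by
  funext i j
  simp only [infMul, Pi.add_apply, mul_add]
  exact (hab i j).tsum_add (hac i j)

lemma infMul_assoc_of_summable
    (h : ∀ i j, Summable (uncurry fun m l : ℕ => a i m * b m l * c l j)) :
    infMul (infMul a b) c = infMul a (infMul b c) := by
  funext i j
  calc infMul (infMul a b) c i j = ∑' (l : ℕ) (m : ℕ), a i m * b m l * c l j := by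
        simp only [infMul, tsum_mul_right]
    _ = ∑' (m : ℕ) (l : ℕ), a i m * b m l * c l j := (h i j).tsum_comm
    _ = infMul a (infMul b c) i j := by simp only [infMul, ← tsum_mul_left, mul_assoc]

end infMul

/-- On rapidly decaying infinite matrices the operation `a ∘ b = a + b + ab`
is well defined (the matrix product series converges absolutely and the result
decays rapidly) and associative. -/
theorem stmt_2 (a b c : ℕ → ℕ → ℂ)
    (ha : RapidDecay a) (hb : RapidDecay b) (hc : RapidDecay c) :
    (∀ i j : ℕ, Summable fun l : ℕ => ‖a i l * b l j‖) ∧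
    RapidDecay (circOp a b) ∧
    circOp (circOp a b) c = circOp a (circOp b c) := by
  refine ⟨ha.summable_norm_mul hb, ha.circOp hb, ?_⟩
  simp only [circOp_eq_add_infMul]
  rw [infMul_add_left ((ha.add hb).summable_mul hc) ((ha.infMul hb).summable_mul hc),
    infMul_add_left (ha.summable_mul hc) (hb.summable_mul hc),
    infMul_add_right (ha.summable_mul (hb.add hc)) (ha.summable_mul (hb.infMul hc)),
    infMul_add_right (ha.summable_mul hb) (ha.summable_mul hc),
    infMul_assoc_of_summable (ha.summable_uncurry_mul_mul hb hc)]
  abel
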